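/- For every finite simple connected graph G of order n ≥ 2 and every positive integer k, max{γ_k(G), dim_k(G)} ≤ γ_L^k(G) ≤ min{dim_k(G) + 1, n − 1}. -/

import Mathlib

open SimpleGraph Finset

/-- `D` is a distance-`k` dominating set of `G`: every vertex outside `D` is within
distance `k` of some vertex of `D`. -/
def IsKDomSet {V : Type*} (G : SimpleGraph V) (k : ℕ) (D : Finset V) : Prop :=
  ∀ u : V, u ∉ D → ∃ w ∈ D, G.dist u w ≤ k

/-- `R` is a distance-`k` resolving set of `G`: any two distinct vertices are
distinguished by the truncated distance `d_k(x,y) = min (d(x,y)) (k+1)` to some vertex of `R`. -/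
def IsKResSet {V : Type*} (G : SimpleGraph V) (k : ℕ) (R : Finset V) : Prop :=
  ∀ x y : V, x ≠ y → ∃ z ∈ R, min (G.dist x z) (k + 1) ≠ min (G.dist y z) (k + 1)

/-- The distance-`k` domination number `γ_k(G)`. -/
noncomputable def kdom {V : Type*} (G : SimpleGraph V) (k : ℕ) : ℕ :=
  sInf {m : ℕ | ∃ D : Finset V, IsKDomSet G k D ∧ D.card = m}

/-- The distance-`k` dimension `dim_k(G)`. -/
noncomputable def kdim {V : Type*} (G : SimpleGraph V) (k : ℕ) : ℕ :=
  sInf {m : ℕ | ∃ R : Finset V, IsKResSet G k R ∧ R.card = m}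

/-- The distance-`k` location-domination number `γ_L^k(G)`. -/
noncomputable def kld {V : Type*} (G : SimpleGraph V) (k : ℕ) : ℕ :=
  sInf {m : ℕ | ∃ S : Finset V, IsKDomSet G k S ∧ IsKResSet G k S ∧ S.card = m}

/-!
A vertex at distance more than `k` from all of a resolving set `R` has the constant
truncated distance vector `(k+1, …, k+1)`, so there is at most one such vertex; adding it to a
minimum resolving set gives a locating-dominating set of size at most `dim_k(G) + 1`. Finally,
in a connected graph with a vertex `v` that has a neighbour, `V \ {v}` is locating-dominating:
`v` is dominated by its neighbour, and any vertex `x ≠ v` is separated from all others by its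
own distance `0`.
-/

section

variable {V : Type*} {G : SimpleGraph V} {k : ℕ}

theorem IsKResSet.mono {R S : Finset V} (hR : IsKResSet G k R) (hRS : R ⊆ S) :
    IsKResSet G k S := fun x y hxy ↦
  let ⟨z, hz, hne⟩ := hR x y hxy
  ⟨z, hRS hz, hne⟩

theorem IsKResSet.eq_of_forall_lt_dist {R : Finset V} (hR : IsKResSet G k R) {x y : V}
    (hx : ∀ z ∈ R, k < G.dist x z) (hy : ∀ z ∈ R, k < G.dist y z) : x = y := by
  by_contra hxy
  obtain ⟨z, hz, hne⟩ := hR x y hxy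
  exact hne (by rw [min_eq_right (hx z hz), min_eq_right (hy z hz)])

theorem IsKResSet.isKDomSet_insert {R : Finset V} [DecidableEq V] (hR : IsKResSet G k R)
    {x : V} (hx : ∀ z ∈ R, k < G.dist x z) : IsKDomSet G k (insert x R) := by
  intro u hu
  by_contra! hfar
  exact hu (hR.eq_of_forall_lt_dist (fun z hz ↦ hfar z (mem_insert_of_mem hz)) hx ▸
    mem_insert_self x R)

theorem IsKResSet.exists_isKDomSet_card_le [DecidableEq V] {R : Finset V}
    (hR : IsKResSet G k R) :
    ∃ S : Finset V, IsKDomSet G k S ∧ IsKResSet G k S ∧ #S ≤ #R + 1 := by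
  by_cases hdom : IsKDomSet G k R
  · exact ⟨R, hdom, hR, by omega⟩
  · obtain ⟨x, -, hx⟩ : ∃ x, x ∉ R ∧ ∀ z ∈ R, k < G.dist x z := by
      simpa [IsKDomSet] using hdom
    exact ⟨insert x R, hR.isKDomSet_insert hx, hR.mono (subset_insert x R),
      card_insert_le x R⟩

theorem SimpleGraph.Connected.isKResSet_univ_erase [Fintype V] [DecidableEq V]
    (hG : G.Connected) (k : ℕ) (v : V) : IsKResSet G k (univ.erase v) := by
  have separates : ∀ x y : V, x ≠ y → min (G.dist x x) (k + 1) ≠ min (G.dist y x) (k + 1) := by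
    intro x y hxy
    have := hG.pos_dist_of_ne hxy.symm
    rw [dist_self]
    omega
  intro x y hxy
  by_cases hxv : x = v
  · exact ⟨y, mem_erase.mpr ⟨hxv ▸ hxy.symm, mem_univ y⟩, (separates y x hxy.symm).symm⟩
  · exact ⟨x, mem_erase.mpr ⟨hxv, mem_univ x⟩, separates x y hxy⟩

theorem SimpleGraph.Adj.isKDomSet_univ_erase [Fintype V] [DecidableEq V] {v w : V}
    (hvw : G.Adj v w) (hk : 1 ≤ k) : IsKDomSet G k (univ.erase v) := by
  intro u hu
  obtain rfl : u = v := by simpa using hu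
  exact ⟨w, mem_erase.mpr ⟨hvw.ne', mem_univ w⟩, (dist_eq_one_iff_adj.mpr hvw).trans_le hk⟩

theorem kdom_le_card {D : Finset V} (hD : IsKDomSet G k D) : kdom G k ≤ #D :=
  Nat.sInf_le ⟨D, hD, rfl⟩

theorem kdim_le_card {R : Finset V} (hR : IsKResSet G k R) : kdim G k ≤ #R :=
  Nat.sInf_le ⟨R, hR, rfl⟩

theorem kld_le_card {S : Finset V} (hSd : IsKDomSet G k S) (hSr : IsKResSet G k S) :
    kld G k ≤ #S :=
  Nat.sInf_le ⟨S, hSd, hSr, rfl⟩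

theorem exists_isKResSet_card_eq_kdim (h : ∃ R : Finset V, IsKResSet G k R) :
    ∃ R : Finset V, IsKResSet G k R ∧ #R = kdim G k :=
  Nat.sInf_mem (s := {m | ∃ R : Finset V, IsKResSet G k R ∧ #R = m})
    (let ⟨R, hR⟩ := h; ⟨#R, R, hR, rfl⟩)

theorem exists_isKDomSet_isKResSet_card_eq_kld
    (h : ∃ S : Finset V, IsKDomSet G k S ∧ IsKResSet G k S) :
    ∃ S : Finset V, IsKDomSet G k S ∧ IsKResSet G k S ∧ #S = kld G k :=
  Nat.sInf_mem (s := {m | ∃ S : Finset V, IsKDomSet G k S ∧ IsKResSet G k S ∧ #S = m})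
    (let ⟨S, hSd, hSr⟩ := h; ⟨#S, S, hSd, hSr, rfl⟩)

theorem kld_le_kdim_add_one [DecidableEq V] (h : ∃ R : Finset V, IsKResSet G k R) :
    kld G k ≤ kdim G k + 1 := by
  obtain ⟨R, hR, hRcard⟩ := exists_isKResSet_card_eq_kdim h
  obtain ⟨S, hSd, hSr, hScard⟩ := hR.exists_isKDomSet_card_le
  exact hRcard ▸ (kld_le_card hSd hSr).trans hScard

end

/-- For every finite simple connected graph `G` of order `n ≥ 2` and positive integer `k`,
`max {γ_k(G), dim_k(G)} ≤ γ_L^k(G) ≤ min {dim_k(G) + 1, n - 1}`. -/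
theorem stmt_4 {V : Type*} [Fintype V] (G : SimpleGraph V) (hG : G.Connected)
    (hn : 2 ≤ Fintype.card V) (k : ℕ) (hk : 1 ≤ k) :
    max (kdom G k) (kdim G k) ≤ kld G k ∧
      kld G k ≤ min (kdim G k + 1) (Fintype.card V - 1) := by
  classical
  have : Nontrivial V := Fintype.one_lt_card_iff_nontrivial.mp hn
  obtain ⟨v⟩ : Nonempty V := inferInstance
  obtain ⟨w, hvw⟩ := hG.preconnected.exists_adj_of_nontrivial v
  have hdom := hvw.isKDomSet_univ_erase hk
  have hres := hG.isKResSet_univ_erase k v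
  obtain ⟨S, hSd, hSr, hScard⟩ := exists_isKDomSet_isKResSet_card_eq_kld ⟨_, hdom, hres⟩
  refine ⟨max_le (hScard ▸ kdom_le_card hSd) (hScard ▸ kdim_le_card hSr),
    le_min (kld_le_kdim_add_one ⟨_, hres⟩) ?_⟩
  calc kld G k ≤ #(univ.erase v) := kld_le_card hdom hres
    _ = Fintype.card V - 1 := by rw [card_erase_of_mem (mem_univ v), card_univ]
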